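/- Let m : \mathbb{R} \to [-1, 1] be continuous, strictly increasing, with m(0) = 0, m(\pm\infty) = \pm 1, m smooth with m' > 0, \int_{\mathbb{R}} m'(x) dx = 2, and m', m'' \in L^1(\mathbb{R}). Suppose additionally that m is odd and that there exists c > 0 with \langle m', m'_\eta \rangle \ge c for all |\eta| \le 1, where m_\eta = m(\cdot - \eta). Then there exists \beta > 0 such that every v \in L^\infty(\mathbb{R}) with \|v - m\|_{L^\infty} \le \beta admits a unique \eta = \eta(v) \in \mathbb{R} with \int_{\mathbb{R}} v(x) m'(x - \eta) dx = 0; moreover |\eta(v)| \le C \|v - m\|_{L^\infty} for a constant C depending only on m. -/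

import Mathlib

open MeasureTheory Filter

/-- Existence and uniqueness of the linear center: under the stated structural
hypotheses on the kink profile `m`, there is `β > 0` such that every measurable
`v` with `‖v - m‖_{L^∞} ≤ β` admits a unique `η ∈ ℝ` with
`∫ v(x) m'(x-η) dx = 0`, and moreover `|η| ≤ C ‖v - m‖_{L^∞}` for a constant `C`
depending only on `m`. -/
theorem stmt_16 (m : ℝ → ℝ)
    (hmC : ContDiff ℝ (⊤ : ℕ∞) m)
    (hmono : StrictMono m)
    (hm0 : m 0 = 0)
    (hrange : ∀ x, -1 ≤ m x ∧ m x ≤ 1)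
    (htop : Tendsto m atTop (nhds 1))
    (hbot : Tendsto m atBot (nhds (-1)))
    (hm' : ∀ x, 0 < deriv m x)
    (hint : (∫ x : ℝ, deriv m x) = 2)
    (hL1 : Integrable (deriv m))
    (hL1' : Integrable (deriv (deriv m)))
    (hodd : ∀ x, m (-x) = -m x)
    (c : ℝ) (hc : 0 < c)
    (hlow : ∀ η : ℝ, |η| ≤ 1 → c ≤ ∫ x : ℝ, deriv m x * deriv m (x - η)) :
    ∃ β : ℝ, 0 < β ∧ ∃ C : ℝ, 0 < C ∧
      ∀ v : ℝ → ℝ, Measurable v → (∀ x, |v x - m x| ≤ β) →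
        (∃! η : ℝ, (∫ x : ℝ, v x * deriv m (x - η)) = 0) ∧
        ∀ η : ℝ, (∫ x : ℝ, v x * deriv m (x - η)) = 0 →
          ∀ ε : ℝ, (∀ x, |v x - m x| ≤ ε) → |η| ≤ C * ε := by
  classical
  have hmC' : ContDiff ℝ (↑(⊤:ℕ∞)) m := hmC.of_le (by simp)
  obtain ⟨hdm, hmC1⟩ := contDiff_infty_iff_deriv.mp hmC'
  obtain ⟨hdm1, hmC2⟩ := contDiff_infty_iff_deriv.mp hmC1
  have hcont1 : Continuous (deriv m) := hdm1.continuous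
  have hcont2 : Continuous (deriv (deriv m)) := (contDiff_infty_iff_deriv.mp hmC2).1.continuous
  have hm1 : ∀ x, |m x| ≤ 1 := fun x => abs_le.mpr ⟨(hrange x).1, (hrange x).2⟩
  set K2 : ℝ := ∫ x, |deriv (deriv m) x| with hK2def
  have habs2 : Integrable (fun x => |deriv (deriv m) x|) := hL1'.abs
  have hK2nonneg : 0 ≤ K2 := integral_nonneg fun x => abs_nonneg _
  -- bound on m'
  have hMb : ∀ x, |deriv m x| ≤ deriv m 0 + K2 := by
    intro x
    have hftc : ∫ t in (0:ℝ)..x, deriv (deriv m) t = deriv m x - deriv m 0 :=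
      intervalIntegral.integral_deriv_eq_sub (fun t _ => hdm1 t)
        (hcont2.intervalIntegrable 0 x)
    have hb : |∫ t in (0:ℝ)..x, deriv (deriv m) t| ≤ K2 := by
      have h1 : |∫ t in (0:ℝ)..x, deriv (deriv m) t|
          ≤ |∫ t in (0:ℝ)..x, abs (deriv (deriv m) t)| :=
        by simpa only [Real.norm_eq_abs] using
          intervalIntegral.norm_integral_le_abs_integral_norm (f := deriv (deriv m)) (a := (0:ℝ)) (b := x) (μ := volume)
      refine h1.trans ?_
      rcases le_total 0 x with h | h
      · rw [intervalIntegral.integral_of_le h, abs_of_nonneg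
          (setIntegral_nonneg measurableSet_Ioc fun t _ => abs_nonneg _)]
        exact setIntegral_le_integral habs2 (Eventually.of_forall fun t => abs_nonneg _)
      · rw [intervalIntegral.integral_symm, intervalIntegral.integral_of_le h, abs_neg,
          abs_of_nonneg (setIntegral_nonneg measurableSet_Ioc fun t _ => abs_nonneg _)]
        exact setIntegral_le_integral habs2 (Eventually.of_forall fun t => abs_nonneg _)
    have hx : deriv m x = deriv m 0 + ∫ t in (0:ℝ)..x, deriv (deriv m) t := by linarith
    rw [hx]
    refine (abs_add_le _ _).trans ?_
    rw [abs_of_pos (hm' 0)]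
    linarith
  set M : ℝ := deriv m 0 + K2 with hMdef
  have hM0 : 0 < M := lt_of_lt_of_le (hm' 0) (by nlinarith)
  -- deriv m is even
  have heven : ∀ x, deriv m (-x) = deriv m x := by
    intro x
    have h1 : deriv (fun y => m (-y)) x = -deriv m (-x) := deriv_comp_neg m x
    have h2 : (fun y => m (-y)) = fun y => -m y := funext hodd
    rw [h2, deriv.fun_neg] at h1
    linarith
  -- integrability of shifted m'
  have hint_m'η : ∀ η : ℝ, Integrable (fun x => deriv m (x - η)) := fun η =>
    hL1.comp_sub_right η
  have hshift : ∀ η : ℝ, (∫ x : ℝ, deriv m (x - η)) = 2 := fun η => by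
    rw [integral_sub_right_eq_self (deriv m) η]; exact hint
  -- ψ
  set ψ : ℝ → ℝ := fun η => ∫ x, m (x + η) * deriv m x with hψdef
  have hψint : ∀ η, Integrable (fun x => m (x + η) * deriv m x) := fun η =>
    hL1.bdd_mul ((hdm.continuous.comp (continuous_id.add continuous_const)).aestronglyMeasurable)
      (c := 1) (Eventually.of_forall fun x => by simpa using hm1 (x + η))
  have hψ0 : ψ 0 = 0 := by
    have hoddf : ∀ x : ℝ, m (-x + 0) * deriv m (-x) = -(m (x + 0) * deriv m x) := by
      intro x; simp [hodd x, heven x]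
    have h := integral_neg_eq_self (fun x => m (x + 0) * deriv m x) (μ := volume)
    simp only [hψdef]
    have : (∫ x : ℝ, m (-x + 0) * deriv m (-x)) = ∫ x : ℝ, m (x + 0) * deriv m x := h
    rw [show (fun x : ℝ => m (-x + 0) * deriv m (-x)) = fun x : ℝ => -(m (x + 0) * deriv m x)
      from funext hoddf] at this
    rw [integral_neg] at this
    simpa using (by linarith [this] : (∫ x : ℝ, m (x + 0) * deriv m x) = 0)
  have hψd : ∀ η₀ : ℝ, HasDerivAt ψ (∫ x, deriv m (x + η₀) * deriv m x) η₀ := by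
    intro η₀
    have key := hasDerivAt_integral_of_dominated_loc_of_deriv_le (μ := volume) (𝕜 := ℝ)
      (F := fun η x => m (x + η) * deriv m x)
      (F' := fun η x => deriv m (x + η) * deriv m x)
      (x₀ := η₀) (bound := fun x => M * deriv m x) (s := Metric.ball η₀ 1) (Metric.ball_mem_nhds η₀ one_pos)
      (Eventually.of_forall fun η => (hψint η).1)
      (hψint η₀)
      ((hcont1.comp (continuous_id.add continuous_const)).mul hcont1).aestronglyMeasurable
      (Eventually.of_forall fun x => by
        intro η _
        rw [Real.norm_eq_abs, abs_mul, abs_of_pos (hm' x)]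
        exact mul_le_mul_of_nonneg_right (hMb (x + η)) (hm' x).le)
      (hL1.const_mul M)
      (Eventually.of_forall fun x => by
        intro η _
        have h1 : HasDerivAt (fun η : ℝ => m (x + η)) (deriv m (x + η)) η := by
          simpa [Function.comp_def] using ((hdm (x + η)).hasDerivAt).comp η ((hasDerivAt_id η).const_add x)
        exact h1.mul_const (deriv m x))
    exact key.2
  have hψd_eq : ∀ η : ℝ, (∫ x, deriv m (x + η) * deriv m x) = ∫ x, deriv m x * deriv m (x - η) := by
    intro η
    have h := integral_add_right_eq_self (μ := volume) (fun x => deriv m x * deriv m (x - η)) η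
    simpa [add_sub_cancel_right] using h
  have hψmono : ∀ η₁ η₂ : ℝ, η₁ ≤ η₂ → ψ η₁ ≤ ψ η₂ := by
    intro η₁ η₂ h
    apply integral_mono (hψint η₁) (hψint η₂)
    intro x
    exact mul_le_mul_of_nonneg_right (hmono.monotone (by linarith)) (hm' x).le
  have hψdiff : Differentiable ℝ ψ := fun η => (hψd η).differentiableAt
  have hψinc : ∀ η₁ η₂ : ℝ, -1 ≤ η₁ → η₂ ≤ 1 → η₁ ≤ η₂ → c * (η₂ - η₁) ≤ ψ η₂ - ψ η₁ := by
    intro η₁ η₂ h1 h2 h12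
    have hgd : ∀ η : ℝ, HasDerivAt (fun η => ψ η - c * η) ((∫ x, deriv m (x + η) * deriv m x) - c) η :=
      fun η => (hψd η).sub (by simpa using (hasDerivAt_id η).const_mul c)
    have hgm : MonotoneOn (fun η => ψ η - c * η) (Set.Icc (-1:ℝ) 1) := by
      apply monotoneOn_of_deriv_nonneg (convex_Icc _ _)
        (Continuous.continuousOn (by exact hψdiff.continuous.sub (continuous_const.mul continuous_id)))
        (fun η _ => ((hgd η).differentiableAt).differentiableWithinAt)
      intro η hη
      rw [interior_Icc] at hη
      rw [(hgd η).deriv, hψd_eq η, sub_nonneg]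
      exact hlow η (abs_le.mpr ⟨hη.1.le, hη.2.le⟩)
    have := hgm (Set.mem_Icc.mpr ⟨h1, by linarith⟩) (Set.mem_Icc.mpr ⟨by linarith, h2⟩) h12
    dsimp at this
    linarith
  have hK2shift : ∀ η : ℝ, (∫ x : ℝ, |deriv (deriv m) (x - η)|) = K2 := fun η => by
    rw [hK2def]; exact integral_sub_right_eq_self (fun x => |deriv (deriv m) x|) η
  have hFub : ∀ η₁ η₂ : ℝ, η₁ ≤ η₂ →
      Integrable (fun x => ∫ η in Set.Ioc η₁ η₂, |deriv (deriv m) (x - η)|) ∧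
      (∫ x : ℝ, ∫ η in Set.Ioc η₁ η₂, |deriv (deriv m) (x - η)|) = K2 * (η₂ - η₁) := by
    intro η₁ η₂ h12
    have hfm : AEStronglyMeasurable (fun p : ℝ × ℝ => |deriv (deriv m) (p.1 - p.2)|)
        (volume.prod (volume.restrict (Set.Ioc η₁ η₂))) :=
      ((hcont2.comp (continuous_fst.sub continuous_snd)).abs).aestronglyMeasurable
    have hIf : Integrable (fun p : ℝ × ℝ => |deriv (deriv m) (p.1 - p.2)|)
        (volume.prod (volume.restrict (Set.Ioc η₁ η₂))) := by
      rw [integrable_prod_iff' hfm]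
      constructor
      · exact Eventually.of_forall fun η => (hL1'.comp_sub_right η).abs
      · have heq : (fun η : ℝ => ∫ x : ℝ, ‖|deriv (deriv m) (x - η)|‖) = fun _ => K2 := by
          funext η
          simp only [Real.norm_eq_abs, abs_abs]
          exact hK2shift η
        rw [heq]
        exact integrableOn_const measure_Ioc_lt_top.ne
    have hswap := integral_integral_swap
      (f := fun x η => |deriv (deriv m) (x - η)|) hIf
    have hRHS : (∫ η in Set.Ioc η₁ η₂, ∫ x : ℝ, |deriv (deriv m) (x - η)|) = K2 * (η₂ - η₁) := by
      simp_rw [hK2shift]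
      rw [setIntegral_const, Real.volume_real_Ioc_of_le h12, smul_eq_mul]
      ring
    exact ⟨hIf.integral_prod_left, by rw [hswap, hRHS]⟩
  have hL : ∀ η₁ η₂ : ℝ, η₁ ≤ η₂ →
      (∫ x : ℝ, |deriv m (x - η₂) - deriv m (x - η₁)|) ≤ K2 * (η₂ - η₁) := by
    intro η₁ η₂ h12
    have hptw : ∀ x : ℝ, |deriv m (x - η₂) - deriv m (x - η₁)|
        ≤ ∫ η in Set.Ioc η₁ η₂, |deriv (deriv m) (x - η)| := by
      intro x
      have hab : x - η₂ ≤ x - η₁ := by linarith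
      have hftc : ∫ t in (x - η₂)..(x - η₁), deriv (deriv m) t
          = deriv m (x - η₁) - deriv m (x - η₂) :=
        intervalIntegral.integral_deriv_eq_sub (fun t _ => hdm1 t)
          (hcont2.intervalIntegrable _ _)
      have h1 : |deriv m (x - η₂) - deriv m (x - η₁)|
          ≤ ∫ t in (x - η₂)..(x - η₁), |deriv (deriv m) t| := by
        rw [abs_sub_comm, ← hftc]
        exact intervalIntegral.abs_integral_le_integral_abs hab
      have h2 : (∫ t in (x - η₂)..(x - η₁), |deriv (deriv m) t|)
          = ∫ η in η₁..η₂, |deriv (deriv m) (x - η)| := by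
        rw [intervalIntegral.integral_comp_sub_left (fun t => |deriv (deriv m) t|) x]
      rw [h2, intervalIntegral.integral_of_le h12] at h1
      exact h1
    calc (∫ x : ℝ, |deriv m (x - η₂) - deriv m (x - η₁)|)
        ≤ ∫ x : ℝ, ∫ η in Set.Ioc η₁ η₂, |deriv (deriv m) (x - η)| :=
          integral_mono (((hint_m'η η₂).sub (hint_m'η η₁)).abs) (hFub η₁ η₂ h12).1 hptw
      _ = K2 * (η₂ - η₁) := (hFub η₁ η₂ h12).2
  refine ⟨min (c/4) (c/(4*(K2+1))), lt_min (by positivity) (by positivity), 2/c, by positivity, ?_⟩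
  set β := min (c/4) (c/(4*(K2+1))) with hβdef
  have hβ1 : β ≤ c/4 := min_le_left _ _
  have hβpos : 0 < β := lt_min (by positivity) (by positivity)
  have hβK2 : β * K2 ≤ c/4 := by
    have h2 : β ≤ c/(4*(K2+1)) := min_le_right _ _
    have h3 : β * K2 ≤ (c/(4*(K2+1))) * K2 := mul_le_mul_of_nonneg_right h2 hK2nonneg
    have hD : (0:ℝ) < 4*(K2+1) := by positivity
    have h4 : (c/(4*(K2+1))) * K2 ≤ c/4 := by
      rw [div_mul_eq_mul_div, div_le_div_iff₀ hD (by norm_num : (0:ℝ) < 4)]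
      nlinarith
    linarith
  intro v hv hvβ
  have hvb : ∀ x, |v x| ≤ 1 + β := by
    intro x
    have h1 := hvβ x
    have h2 := hm1 x
    calc |v x| = |(v x - m x) + m x| := by ring_nf
      _ ≤ |v x - m x| + |m x| := abs_add_le _ _
      _ ≤ 1 + β := by linarith
  have hwmeas : AEStronglyMeasurable (fun x => v x - m x) volume :=
    hv.aestronglyMeasurable.sub hdm.continuous.aestronglyMeasurable
  have hwint : ∀ η, Integrable (fun x => (v x - m x) * deriv m (x - η)) := fun η =>
    (hint_m'η η).bdd_mul hwmeas (c := β) (Eventually.of_forall fun x => by simpa [Real.norm_eq_abs] using hvβ x)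
  have hmint : ∀ η, Integrable (fun x => m x * deriv m (x - η)) := fun η =>
    (hint_m'η η).bdd_mul hdm.continuous.aestronglyMeasurable
      (c := 1) (Eventually.of_forall fun x => by simpa [Real.norm_eq_abs] using hm1 x)
  set φ : ℝ → ℝ := fun η => ∫ x, v x * deriv m (x - η) with hφdef
  set e : ℝ → ℝ := fun η => ∫ x, (v x - m x) * deriv m (x - η) with hedef
  suffices hmain : (∃! η : ℝ, φ η = 0) ∧
      ∀ η : ℝ, φ η = 0 → ∀ ε : ℝ, (∀ x, |v x - m x| ≤ ε) → |η| ≤ 2 / c * ε by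
    exact hmain
  have hψalt : ∀ η, (∫ x, m x * deriv m (x - η)) = ψ η := by
    intro η
    have h := integral_add_right_eq_self (μ := volume) (fun x => m x * deriv m (x - η)) η
    simpa [add_sub_cancel_right] using h.symm
  have hφeq : ∀ η, φ η = ψ η + e η := by
    intro η
    have hsplit : (fun x => v x * deriv m (x - η))
        = fun x => m x * deriv m (x - η) + (v x - m x) * deriv m (x - η) := by
      funext x; ring
    simp only [hφdef, hedef, hsplit]
    rw [integral_add (hmint η) (hwint η), hψalt η]
  have heb : ∀ (ε' : ℝ), (∀ x, |v x - m x| ≤ ε') → ∀ η, |e η| ≤ 2 * ε' := by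
    intro ε' hε' η
    have h1 : ‖∫ x, (v x - m x) * deriv m (x - η)‖ ≤ ∫ x, ε' * deriv m (x - η) := by
      apply norm_integral_le_of_norm_le ((hint_m'η η).const_mul ε')
      refine Eventually.of_forall fun x => ?_
      rw [Real.norm_eq_abs, abs_mul, abs_of_pos (hm' (x - η))]
      exact mul_le_mul_of_nonneg_right (hε' x) (hm' (x - η)).le
    rw [Real.norm_eq_abs] at h1
    rw [integral_const_mul, hshift η] at h1
    calc |e η| = |∫ x, (v x - m x) * deriv m (x - η)| := rfl
      _ ≤ ε' * 2 := h1
      _ = 2 * ε' := by ring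
  have hgen : ∀ (u : ℝ → ℝ) (B : ℝ), AEStronglyMeasurable u volume → (∀ x, |u x| ≤ B) →
      ∀ η₁ η₂ : ℝ, η₁ ≤ η₂ →
      |(∫ x, u x * deriv m (x - η₂)) - ∫ x, u x * deriv m (x - η₁)| ≤ B * (K2 * (η₂ - η₁)) := by
    intro u B hum huB η₁ η₂ h12
    have hBnn : 0 ≤ B := le_trans (abs_nonneg _) (huB 0)
    have hu2 : Integrable (fun x => u x * deriv m (x - η₂)) :=
      (hint_m'η η₂).bdd_mul hum (c := B) (Eventually.of_forall fun x => by simpa [Real.norm_eq_abs] using huB x)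
    have hu1 : Integrable (fun x => u x * deriv m (x - η₁)) :=
      (hint_m'η η₁).bdd_mul hum (c := B) (Eventually.of_forall fun x => by simpa [Real.norm_eq_abs] using huB x)
    have hdint : Integrable (fun x => |deriv m (x - η₂) - deriv m (x - η₁)|) :=
      ((hint_m'η η₂).sub (hint_m'η η₁)).abs
    have hdiff : (∫ x, u x * deriv m (x - η₂)) - ∫ x, u x * deriv m (x - η₁)
        = ∫ x, u x * (deriv m (x - η₂) - deriv m (x - η₁)) := by
      rw [← integral_sub hu2 hu1]; congr 1; funext x; ring
    rw [hdiff]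
    have h1 : ‖∫ x, u x * (deriv m (x - η₂) - deriv m (x - η₁))‖
        ≤ ∫ x, B * |deriv m (x - η₂) - deriv m (x - η₁)| := by
      apply norm_integral_le_of_norm_le (hdint.const_mul B)
      refine Eventually.of_forall fun x => ?_
      rw [Real.norm_eq_abs, abs_mul]
      exact mul_le_mul_of_nonneg_right (huB x) (abs_nonneg _)
    rw [Real.norm_eq_abs, integral_const_mul] at h1
    exact h1.trans (mul_le_mul_of_nonneg_left (hL η₁ η₂ h12) hBnn)
  have heLip : ∀ η₁ η₂ : ℝ, η₁ ≤ η₂ → |e η₂ - e η₁| ≤ β * (K2 * (η₂ - η₁)) := fun η₁ η₂ h =>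
    hgen (fun x => v x - m x) β hwmeas hvβ η₁ η₂ h
  have hφLip : ∀ η₁ η₂ : ℝ, η₁ ≤ η₂ → |φ η₂ - φ η₁| ≤ (1+β) * (K2 * (η₂ - η₁)) := fun η₁ η₂ h =>
    hgen v (1+β) hv.aestronglyMeasurable hvb η₁ η₂ h
  have hφcont : Continuous φ := by
    refine (LipschitzWith.of_dist_le_mul (K := Real.toNNReal ((1+β)*K2)) ?_).continuous
    intro a b
    rw [Real.dist_eq, Real.dist_eq, Real.coe_toNNReal _ (by positivity)]
    rcases le_total a b with h | h
    · rw [abs_sub_comm (φ a) (φ b), abs_sub_comm a b, abs_of_nonneg (sub_nonneg.mpr h)]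
      calc |φ b - φ a| ≤ (1+β) * (K2 * (b - a)) := hφLip a b h
        _ = (1+β) * K2 * (b - a) := by ring
    · rw [abs_of_nonneg (sub_nonneg.mpr h)]
      calc |φ a - φ b| ≤ (1+β) * (K2 * (a - b)) := hφLip b a h
        _ = (1+β) * K2 * (a - b) := by ring
  have hψ1 : c ≤ ψ 1 := by
    have := hψinc 0 1 (by norm_num) le_rfl (by norm_num)
    rw [hψ0] at this; linarith
  have hψm1 : ψ (-1) ≤ -c := by
    have := hψinc (-1) 0 le_rfl (by norm_num) (by norm_num)
    rw [hψ0] at this; linarith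
  have hposR : ∀ η, 1 ≤ η → 0 < φ η := by
    intro η h
    have h1 : ψ 1 ≤ ψ η := hψmono 1 η h
    have h2 := abs_le.mp (heb β hvβ η)
    rw [hφeq]
    linarith
  have hnegL : ∀ η, η ≤ -1 → φ η < 0 := by
    intro η h
    have h1 : ψ η ≤ ψ (-1) := hψmono η (-1) h
    have h2 := abs_le.mp (heb β hvβ η)
    rw [hφeq]
    linarith
  have hφmono : ∀ η₁ η₂, -1 ≤ η₁ → η₂ ≤ 1 → η₁ < η₂ → φ η₁ < φ η₂ := by
    intro η₁ η₂ h1 h2 h12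
    have hψi := hψinc η₁ η₂ h1 h2 h12.le
    have hei := abs_le.mp (heLip η₁ η₂ h12.le)
    have hmm : β * (K2 * (η₂ - η₁)) ≤ (c/4) * (η₂ - η₁) := by
      have : 0 ≤ η₂ - η₁ := by linarith
      nlinarith
    rw [hφeq, hφeq]
    nlinarith
  have hm1lt : φ (-1) < 0 := hnegL (-1) le_rfl
  have h1gt : 0 < φ 1 := hposR 1 le_rfl
  obtain ⟨η₀, hη₀mem, hη₀⟩ := intermediate_value_Icc (by norm_num : (-1:ℝ) ≤ 1)
    hφcont.continuousOn (Set.mem_Icc.mpr ⟨hm1lt.le, h1gt.le⟩)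
  have hzero_mem : ∀ η, φ η = 0 → -1 ≤ η ∧ η ≤ 1 := by
    intro η hη
    constructor
    · by_contra h
      push_neg at h
      exact absurd hη (ne_of_lt (hnegL η (by linarith)))
    · by_contra h
      push_neg at h
      exact absurd hη (ne_of_gt (hposR η (by linarith)))
  have huniq : ∀ a b, φ a = 0 → φ b = 0 → a = b := by
    intro a b ha hb
    obtain ⟨ha1, ha2⟩ := hzero_mem a ha
    obtain ⟨hb1, hb2⟩ := hzero_mem b hb
    rcases lt_trichotomy a b with h | h | h
    · have := hφmono a b ha1 hb2 h
      rw [ha, hb] at this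
      exact absurd this (lt_irrefl 0)
    · exact h
    · have := hφmono b a hb1 ha2 h
      rw [ha, hb] at this
      exact absurd this (lt_irrefl 0)
  clear_value e φ ψ β M
  constructor
  · exact ⟨η₀, hη₀, fun η hη => huniq η η₀ hη hη₀⟩
  · intro η hφη ε hε
    have hε0 : 0 ≤ ε := le_trans (abs_nonneg _) (hε 0)
    obtain ⟨hl, hr⟩ := hzero_mem η hφη
    have heη := abs_le.mp (heb ε hε η)
    have hψe : ψ η = -e η := by
      have := hφeq η
      rw [hφη] at this
      linarith
    have hgoal : c * |η| ≤ 2 * ε := by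
      rcases le_total 0 η with h | h
      · have hi := hψinc 0 η (by norm_num) hr h
        rw [hψ0] at hi
        rw [abs_of_nonneg h]
        ring_nf at hi ⊢
        linarith
      · have hi := hψinc η 0 hl (by norm_num) h
        rw [hψ0] at hi
        rw [abs_of_nonpos h]
        ring_nf at hi ⊢
        linarith
    rw [div_mul_eq_mul_div, le_div_iff₀ hc]
    calc |η| * c = c * |η| := mul_comm _ _
      _ ≤ 2 * ε := hgoal
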